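/- Let M be a combinatorial model category and κ a sufficiently large regular cardinal such that M admits κ-accessible functorial factorizations and generating cofibrations with κ-presentable domains and codomains. Then κ-filtered colimits in M preserve weak equivalences. -/

import Mathlib

universe w v u

open CategoryTheory CategoryTheory.Limits Opposite

namespace Paper

variable {C : Type u} [Category.{v} C]

/-- `g` is a retract of `f` in the arrow category. -/
def IsRetractOfArrow {X Y A B : C} (g : X ⟶ Y) (f : A ⟶ B) : Prop :=
  ∃ (i : X ⟶ A) (r : A ⟶ X) (i' : Y ⟶ B) (r' : B ⟶ Y),
    i ≫ r = 𝟙 X ∧ i' ≫ r' = 𝟙 Y ∧ i ≫ f = g ≫ i' ∧ r ≫ g = f ≫ r'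

/-- `f` is a pushout of some morphism belonging to `I`. -/
def IsPushoutOfElem (I : MorphismProperty C) {X Y : C} (f : X ⟶ Y) : Prop :=
  ∃ (A B : C) (g : A ⟶ B) (h : A ⟶ X) (k : B ⟶ Y), I g ∧ IsPushout g h k f

/-- The inclusion of the interval `[⊥, j)` into a preorder. -/
def ltInclusion {J : Type w} [Preorder J] (j : J) : Set.Iio j ⥤ J :=
  (show Monotone (fun k : Set.Iio j => (k : J)) from fun _ _ h => h).functor

/-- The canonical cocone on the restriction of `F` to `[⊥, j)`, with vertex `F.obj j`. -/
@[simps]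
def coconeLT {J : Type w} [Preorder J] (F : J ⥤ C) (j : J) :
    Limits.Cocone (ltInclusion j ⋙ F) where
  pt := F.obj j
  ι :=
    { app := fun k => F.map (homOfLE (le_of_lt k.2))
      naturality := fun k l h => by
        dsimp [ltInclusion]
        erw [← F.map_comp, Category.comp_id]
        congr 1 }

/-- A witness that `f` is a transfinite composition of pushouts of morphisms of `I`:
a colimit-preserving well-ordered chain starting at the source of `f`, each successor
step of which is a pushout of a morphism of `I`, whose composition is `f`. -/
structure TransfiniteCompositionWitness (I : MorphismProperty C) {X Y : C} (f : X ⟶ Y) where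
  J : Type v
  [linOrd : LinearOrder J]
  [orderBot : OrderBot J]
  [succOrder : SuccOrder J]
  [wellFounded : WellFoundedLT J]
  F : J ⥤ C
  c : Limits.Cocone F
  isColimit : Limits.IsColimit c
  isoBot : X ≅ F.obj ⊥
  isoPt : c.pt ≅ Y
  fac : f = isoBot.hom ≫ c.ι.app ⊥ ≫ isoPt.hom
  succ : ∀ j : J, ¬ IsMax j → IsPushoutOfElem I (F.map (homOfLE (Order.le_succ j)))
  limit : ∀ j : J, Order.IsSuccLimit j → Nonempty (Limits.IsColimit (coconeLT F j))

/-- `cell I`: the class of transfinite compositions of pushouts of morphisms of `I`. -/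
def transfiniteCell (I : MorphismProperty C) : MorphismProperty C :=
  fun _ _ f => Nonempty (TransfiniteCompositionWitness I f)

/-- `inj I`: the class of morphisms with the right lifting property with respect to `I`. -/
def injClass (I : MorphismProperty C) : MorphismProperty C :=
  fun _ _ q => ∀ ⦃A B : C⦄ (g : A ⟶ B), I g → HasLiftingProperty g q

/-- `cof I`: the class of morphisms with the left lifting property with respect to `inj I`. -/
def cofClass (I : MorphismProperty C) : MorphismProperty C :=
  fun _ _ f => ∀ ⦃X Y : C⦄ (q : X ⟶ Y), injClass I q → HasLiftingProperty f q

/-- A category `J` is `κ`-filtered if every diagram indexed by a small category with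
fewer than `κ` arrows admits a cocone. -/
def IsCardinalFiltered (J : Type v) [Category.{v} J] (κ : Cardinal.{v}) : Prop :=
  ∀ (A : Type v) [SmallCategory A], Cardinal.mk (Arrow A) < κ →
    ∀ F : A ⥤ J, Nonempty (Limits.Cocone F)

/-- An object `X` is `κ`-presentable if its corepresentable functor preserves
`κ`-filtered colimits. -/
def IsPresentableObj (κ : Cardinal.{v}) (X : C) : Prop :=
  ∀ (J : Type v) [SmallCategory J], IsCardinalFiltered J κ →
    Nonempty (Limits.PreservesColimitsOfShape J (coyoneda.obj (Opposite.op X)))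

/-- A presentation of `X` as a `κ`-filtered colimit of objects belonging to `G`. -/
structure FilteredColimitPresentation (κ : Cardinal.{v}) (G : Set C) (X : C) where
  J : Type v
  [cat : SmallCategory J]
  filtered : IsCardinalFiltered J κ
  F : J ⥤ C
  mem : ∀ j, F.obj j ∈ G
  c : Limits.Cocone F
  isColimit : Limits.IsColimit c
  iso : c.pt ≅ X

/-- A category is locally `κ`-presentable if it is cocomplete and has a small set of
`κ`-presentable objects of which every object is a `κ`-filtered colimit. -/
structure IsLocallyPresentableCat (κ : Cardinal.{v}) (C : Type u) [Category.{v} C] : Prop where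
  hasColimits : Limits.HasColimits C
  generators : ∃ G : Set C, Small.{v} G ∧ (∀ X ∈ G, IsPresentableObj κ X) ∧
    ∀ X : C, Nonempty (FilteredColimitPresentation κ G X)

/-- A class of morphisms is small if it is, up to isomorphism in the arrow category,
indexed by a small type. -/
def MorphismPropertyIsSmall (I : MorphismProperty C) : Prop :=
  ∃ (ι : Type v) (f : ι → Arrow C), ∀ g : Arrow C, I g.hom ↔ ∃ i, Nonempty (f i ≅ g)

/-- A model structure on a category: weak equivalences, cofibrations and fibrations,
subject to the two-out-of-three, retract, lifting and factorization axioms. -/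
structure ModelStructure (C : Type u) [Category.{v} C] : Type (max u v) where
  W : MorphismProperty C
  Cof : MorphismProperty C
  Fib : MorphismProperty C
  w_of_iso : ∀ {X Y : C} (f : X ⟶ Y), IsIso f → W f
  cof_of_iso : ∀ {X Y : C} (f : X ⟶ Y), IsIso f → Cof f
  fib_of_iso : ∀ {X Y : C} (f : X ⟶ Y), IsIso f → Fib f
  w_comp : ∀ {X Y Z : C} (f : X ⟶ Y) (g : Y ⟶ Z), W f → W g → W (f ≫ g)
  w_cancel_left : ∀ {X Y Z : C} (f : X ⟶ Y) (g : Y ⟶ Z), W f → W (f ≫ g) → W g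
  w_cancel_right : ∀ {X Y Z : C} (f : X ⟶ Y) (g : Y ⟶ Z), W g → W (f ≫ g) → W f
  cof_comp : ∀ {X Y Z : C} (f : X ⟶ Y) (g : Y ⟶ Z), Cof f → Cof g → Cof (f ≫ g)
  fib_comp : ∀ {X Y Z : C} (f : X ⟶ Y) (g : Y ⟶ Z), Fib f → Fib g → Fib (f ≫ g)
  w_retract : ∀ {X Y A B : C} (g : X ⟶ Y) (f : A ⟶ B),
    IsRetractOfArrow g f → W f → W g
  cof_retract : ∀ {X Y A B : C} (g : X ⟶ Y) (f : A ⟶ B),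
    IsRetractOfArrow g f → Cof f → Cof g
  fib_retract : ∀ {X Y A B : C} (g : X ⟶ Y) (f : A ⟶ B),
    IsRetractOfArrow g f → Fib f → Fib g
  lift_trivCof_fib : ∀ {A B X Y : C} (i : A ⟶ B) (p : X ⟶ Y),
    Cof i → W i → Fib p → HasLiftingProperty i p
  lift_cof_trivFib : ∀ {A B X Y : C} (i : A ⟶ B) (p : X ⟶ Y),
    Cof i → Fib p → W p → HasLiftingProperty i p
  fact_cof_trivFib : ∀ {X Y : C} (f : X ⟶ Y),
    ∃ (Z : C) (i : X ⟶ Z) (p : Z ⟶ Y), Cof i ∧ Fib p ∧ W p ∧ i ≫ p = f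
  fact_trivCof_fib : ∀ {X Y : C} (f : X ⟶ Y),
    ∃ (Z : C) (i : X ⟶ Z) (p : Z ⟶ Y), Cof i ∧ W i ∧ Fib p ∧ i ≫ p = f

variable {D : Type u} [Category.{v} D]

/-- An object is fibrant if the morphism to the terminal object is a fibration. -/
def ModelStructure.Fibrant [Limits.HasTerminal C] (M : ModelStructure C) (X : C) : Prop :=
  M.Fib (Limits.terminal.from X)

/-- An object is cofibrant if the morphism from the initial object is a cofibration. -/
def ModelStructure.Cofibrant [Limits.HasInitial C] (M : ModelStructure C) (X : C) : Prop :=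
  M.Cof (Limits.initial.to X)

/-!
Factor `colim τ` functorially as a trivial cofibration followed by a fibration `p`. As the
factorization functor preserves `κ`-filtered colimits, `p` is the colimit of the fibration parts
`p_a` of the `τ_a`, which are trivial fibrations by two-out-of-three. Trivial fibrations are the
maps in `inj I`, and since the maps of `I` have `κ`-presentable domains and codomains, a lifting
problem of a map of `I` against `p` factors through some stage `p_a`, where it is solved. Hence
`p` is a trivial fibration and `colim τ` a weak equivalence.
-/

lemma IsCardinalFiltered.isFiltered {A : Type v} [SmallCategory A] {κ : Cardinal.{v}}
    (hA : IsCardinalFiltered A κ) (hκ : Cardinal.aleph0 ≤ κ) : IsFiltered A :=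
  IsFiltered.of_cocone_nonempty.{v} _ fun {J} (_ : SmallCategory J) (_ : FinCategory J) F =>
    hA J ((Cardinal.lt_aleph0_of_finite _).trans_le hκ) F

lemma ModelStructure.injClass_iff (M : ModelStructure C) {I : MorphismProperty C}
    (hIgen : ∀ ⦃Q R : C⦄ (c : Q ⟶ R), M.Cof c ↔ cofClass I c) {X Y : C} (q : X ⟶ Y) :
    injClass I q ↔ M.Fib q ∧ M.W q := by
  constructor
  · intro hq
    obtain ⟨Z, i, p, hi, hp, hw, fac⟩ := M.fact_cof_trivFib q
    have : HasLiftingProperty i q := (hIgen i).mp hi q hq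
    obtain ⟨r, hr, hrp⟩ : ∃ r : Z ⟶ X, i ≫ r = 𝟙 X ∧ r ≫ q = p :=
      let sq : CommSq (𝟙 X) i q p := ⟨by simp [fac]⟩
      ⟨sq.lift, sq.fac_left, sq.fac_right⟩
    have hret : IsRetractOfArrow q p :=
      ⟨i, r, 𝟙 Y, 𝟙 Y, hr, by simp, by simp [fac], by simp [hrp]⟩
    exact ⟨M.fib_retract q p hret hp, M.w_retract q p hret hw⟩
  · rintro ⟨hFib, hW⟩ _ _ g hg
    exact M.lift_cof_trivFib g q ((hIgen g).mpr fun _ _ _ hq => hq g hg) hFib hW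

section FilteredColimits

variable {A : Type*} [Category A] [IsFiltered A] {H G : A ⥤ C} (p : H ⟶ G)
  {cH : Cocone H} {cG : Cocone G} (hH : IsColimit cH) (hG : IsColimit cG)
  {q : cH.pt ⟶ cG.pt} (hq : ∀ a, cH.ι.app a ≫ q = p.app a ≫ cG.ι.app a)
  {Q R : C} (g : Q ⟶ R) [PreservesColimitsOfShape A (coyoneda.obj (op Q))]
  [PreservesColimitsOfShape A (coyoneda.obj (op R))]
include hH hG hq

lemma exists_commSq_app_of_isColimit {u : Q ⟶ cH.pt} {v : R ⟶ cG.pt} (sq : CommSq u g q v) :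
    ∃ (a : A) (u' : Q ⟶ H.obj a) (v' : R ⟶ G.obj a),
      CommSq u' g (p.app a) v' ∧ u' ≫ cH.ι.app a = u ∧ v' ≫ cG.ι.app a = v := by
  obtain ⟨a, u₀, rfl⟩ := exists_hom_of_preservesColimit_coyoneda hH u
  obtain ⟨b, v₀, rfl⟩ := exists_hom_of_preservesColimit_coyoneda hG v
  let u₁ := u₀ ≫ H.map (IsFiltered.leftToMax a b)
  let v₁ := v₀ ≫ G.map (IsFiltered.rightToMax a b)
  have hu₁ : u₁ ≫ cH.ι.app _ = u₀ ≫ cH.ι.app a := by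
    simp only [u₁, Category.assoc, cH.w]
  have hv₁ : v₁ ≫ cG.ι.app _ = v₀ ≫ cG.ι.app b := by
    simp only [v₁, Category.assoc, cG.w]
  have hcolim : (u₁ ≫ p.app _) ≫ cG.ι.app _ = (g ≫ v₁) ≫ cG.ι.app _ := by
    rw [Category.assoc, ← hq, ← Category.assoc, hu₁, sq.w, Category.assoc, hv₁]
  obtain ⟨d, t, ht⟩ := exists_eq_of_preservesColimit_coyoneda_self hG _ _ hcolim
  exact ⟨d, u₁ ≫ H.map t, v₁ ≫ G.map t, ⟨by simpa using ht⟩, by simpa using hu₁,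
    by simpa using hv₁⟩

lemma hasLiftingProperty_of_isColimit (hp : ∀ a, HasLiftingProperty g (p.app a)) :
    HasLiftingProperty g q where
  sq_hasLift {u v} sq := by
    obtain ⟨a, u', v', sq', rfl, rfl⟩ := exists_commSq_app_of_isColimit p hH hG hq g sq
    exact ⟨⟨⟨sq'.lift ≫ cH.ι.app a, by rw [sq'.fac_left_assoc],
      by rw [Category.assoc, hq, sq'.fac_right_assoc]⟩⟩⟩

end FilteredColimits

lemma injClass_isStableUnderColimitsOfShape (I : MorphismProperty C)
    (A : Type*) [Category A] [IsFiltered A]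
    (hI : ∀ ⦃Q R : C⦄ (g : Q ⟶ R), I g → PreservesColimitsOfShape A (coyoneda.obj (op Q)) ∧
      PreservesColimitsOfShape A (coyoneda.obj (op R))) :
    (injClass I).IsStableUnderColimitsOfShape A where
  condition _ _ _ _ hH hG p hp _ hq _ _ g hg :=
    have := (hI g hg).1
    have := (hI g hg).2
    hasLiftingProperty_of_isColimit p hH hG hq g fun a => hp a g hg

section ArrowDiagram

variable {A : Type*} [Category A] {F G : A ⥤ C}

@[simps]
def arrowDiagram (τ : F ⟶ G) : A ⥤ Arrow C where
  obj a := Arrow.mk (τ.app a)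
  map φ := Arrow.homMk (F.map φ) (G.map φ) (τ.naturality φ)

@[simps]
def arrowCocone (τ : F ⟶ G) {cF : Cocone F} (cG : Cocone G) (hF : IsColimit cF) :
    Cocone (arrowDiagram τ) where
  pt := Arrow.mk (hF.desc ((Cocone.precompose τ).obj cG))
  ι :=
    { app a := Arrow.homMk (cF.ι.app a) (cG.ι.app a) (hF.fac _ a)
      naturality _ _ f := Arrow.hom_ext _ _ ((cF.w f).trans (Category.comp_id _).symm)
        ((cG.w f).trans (Category.comp_id _).symm) }

def isColimitArrowCocone (τ : F ⟶ G) {cF : Cocone F} {cG : Cocone G} (hF : IsColimit cF)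
    (hG : IsColimit cG) : IsColimit (arrowCocone τ cG hF) :=
  Comma.fstSndJointlyReflectColimit hF hG

end ArrowDiagram

lemma _root_.CategoryTheory.MorphismProperty.FunctorialFactorizationData.colimitsOfShape_p_app
    {W₁ W₂ : MorphismProperty C} (fact : MorphismProperty.FunctorialFactorizationData W₁ W₂)
    (P : MorphismProperty C) {A : Type*} [Category A] [PreservesColimitsOfShape A fact.Z]
    {F G : A ⥤ C} (τ : F ⟶ G) {cF : Cocone F} {cG : Cocone G}
    (hF : IsColimit cF) (hG : IsColimit cG) (hP : ∀ a, P (fact.p.app (Arrow.mk (τ.app a)))) :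
    P.colimitsOfShape A (fact.p.app (Arrow.mk (hF.desc ((Cocone.precompose τ).obj cG)))) :=
  MorphismProperty.colimitsOfShape.mk' _ G _ cG
    (isColimitOfPreserves fact.Z (isColimitArrowCocone τ hF hG)) hG
    (Functor.whiskerLeft (arrowDiagram τ) fact.p) hP _
    fun a => fact.p.naturality ((arrowCocone τ cG hF).ι.app a)

theorem statement17_general (κ : Cardinal.{v}) (hκ : κ.IsRegular)
    (M : ModelStructure C)
    (I : MorphismProperty C)
    (hIgen : ∀ ⦃Q R : C⦄ (c : Q ⟶ R), M.Cof c ↔ cofClass I c)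
    (hIpres : ∀ ⦃Q R : C⦄ (c : Q ⟶ R), I c →
      IsPresentableObj κ Q ∧ IsPresentableObj κ R)
    (fact₁ : MorphismProperty.FunctorialFactorizationData
      (fun X Y (f : X ⟶ Y) => M.Cof f ∧ M.W f : MorphismProperty C) M.Fib)
    (hacc₁ : ∀ (J : Type v) [SmallCategory J], IsCardinalFiltered J κ →
      Nonempty (PreservesColimitsOfShape J fact₁.Z)) :
    ∀ (A : Type v) [SmallCategory A], IsCardinalFiltered A κ →
      ∀ (F G : A ⥤ C) (τ : F ⟶ G) (cF : Cocone F) (cG : Cocone G)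
        (hF : IsColimit cF) (_hG : IsColimit cG),
        (∀ a : A, M.W (τ.app a)) →
        M.W (hF.desc ((Cocone.precompose τ).obj cG)) := by
  intro A _ hA F G τ cF cG hF hG hτ
  have := (hacc₁ A hA).some
  have := hA.isFiltered hκ.aleph0_le
  have hInjStable :=
    (MorphismProperty.isStableUnderColimitsOfShape_iff_colimitsOfShape_le _ _).1
      (injClass_isStableUnderColimitsOfShape I A fun _ _ g hg =>
        ⟨((hIpres g hg).1 A hA).some, ((hIpres g hg).2 A hA).some⟩)
  have hpInj : ∀ a, injClass I (fact₁.p.app (Arrow.mk (τ.app a))) := fun a =>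
    (M.injClass_iff hIgen _).2 ⟨fact₁.hp _,
      M.w_cancel_left _ _ (fact₁.hi _).2 (by rw [fact₁.fac_app]; exact hτ a)⟩
  have hpColim := hInjStable _ (fact₁.colimitsOfShape_p_app (injClass I) τ hF hG hpInj)
  have hfac : _ ≫ _ = hF.desc ((Cocone.precompose τ).obj cG) :=
    fact₁.fac_app (f := Arrow.mk (hF.desc ((Cocone.precompose τ).obj cG)))
  rw [← hfac]
  exact M.w_comp _ _ (fact₁.hi _).2 ((M.injClass_iff hIgen _).1 hpColim).2

/-- Let `M` be a combinatorial model category and `κ` a sufficiently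
large regular cardinal, in the sense that `M` admits `κ`-accessible functorial
factorizations and a small set of generating cofibrations with `κ`-presentable domains
and codomains. Then `κ`-filtered colimits in `M` preserve weak equivalences. -/
theorem statement17 (κ : Cardinal.{v}) (hκ : κ.IsRegular)
    (hLP : IsLocallyPresentableCat κ C) (M : ModelStructure C)
    (I : MorphismProperty C) (hIsmall : MorphismPropertyIsSmall I)
    (hIgen : ∀ ⦃Q R : C⦄ (c : Q ⟶ R), M.Cof c ↔ cofClass I c)
    (hIpres : ∀ ⦃Q R : C⦄ (c : Q ⟶ R), I c →
      IsPresentableObj κ Q ∧ IsPresentableObj κ R)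
    (fact₁ : MorphismProperty.FunctorialFactorizationData
      (fun X Y (f : X ⟶ Y) => M.Cof f ∧ M.W f : MorphismProperty C) M.Fib)
    (fact₂ : MorphismProperty.FunctorialFactorizationData
      M.Cof (fun X Y (f : X ⟶ Y) => M.Fib f ∧ M.W f : MorphismProperty C))
    (hacc₁ : ∀ (J : Type v) [SmallCategory J], IsCardinalFiltered J κ →
      Nonempty (PreservesColimitsOfShape J fact₁.Z))
    (hacc₂ : ∀ (J : Type v) [SmallCategory J], IsCardinalFiltered J κ →
      Nonempty (PreservesColimitsOfShape J fact₂.Z)) :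
    ∀ (A : Type v) [SmallCategory A], IsCardinalFiltered A κ →
      ∀ (F G : A ⥤ C) (τ : F ⟶ G) (cF : Cocone F) (cG : Cocone G)
        (hF : IsColimit cF) (_hG : IsColimit cG),
        (∀ a : A, M.W (τ.app a)) →
        M.W (hF.desc ((Cocone.precompose τ).obj cG)) :=
  statement17_general κ hκ M I hIgen hIpres fact₁ hacc₁

end Paper
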